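/- arXiv:1812.05303 — 3 statements merged into one kernel-verified Lean document; each statement's English description precedes it below -/
import Mathlib

section
/- Define E(x) := exp((i/2)∫_{-∞}^x q(y) r(y) dy), u(x) := q(x) E(x)⁻², and v(x) := (-(i/2) r'(x) + (1/4) q(x) r(x)²) E(x)². If (α,β) solves the energy-dependent system α' = -iζ²α + ζ q β, β' = ζ r α + iζ²β with λ = ζ², then the pair (ξ,η) defined by [ξ;η] = G(x)⁻¹[α;β], where G(x) is the matrix with entries G₁₁ = √λ E, G₁₂ = 0, G₂₁ = (i/2) r E, G₂₂ = E⁻¹, solves the AKNS system ξ' = -iλ ξ + u η, η' = v ξ + iλ η. -/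
open Complex MeasureTheory

theorem energy_dependent_to_AKNS_uv
    (q r : ℝ → ℂ) (hq : ContDiff ℝ (⊤ : ℕ∞) q) (hr : ContDiff ℝ (⊤ : ℕ∞) r)
    (hqr : Integrable (fun y => q y * r y))
    (ζ : ℂ) (hζ : ζ ≠ 0) (lam : ℂ) (hlam : lam = ζ ^ 2)
    (E : ℝ → ℂ) (hE : ∀ x, E x = Complex.exp ((I / 2) * ∫ y in Set.Iic x, q y * r y))
    (u v : ℝ → ℂ)
    (hu : ∀ x, u x = q x * (E x) ^ (-2 : ℤ))
    (hv : ∀ x, v x = (-(I / 2) * deriv r x + (1 / 4) * q x * (r x) ^ 2) * (E x) ^ 2)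
    (α β : ℝ → ℂ)
    (hα : ∀ x, HasDerivAt α (-(I * ζ ^ 2) * α x + ζ * q x * β x) x)
    (hβ : ∀ x, HasDerivAt β (ζ * r x * α x + I * ζ ^ 2 * β x) x)
    (G : ℝ → Matrix (Fin 2) (Fin 2) ℂ)
    (hG : ∀ x, G x = !![ζ * E x, 0; (I / 2) * r x * E x, (E x)⁻¹])
    (ξ η : ℝ → ℂ)
    (hξ : ∀ x, ξ x = (G x)⁻¹.mulVec ![α x, β x] 0)
    (hη : ∀ x, η x = (G x)⁻¹.mulVec ![α x, β x] 1) :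
    (∀ x, HasDerivAt ξ (-(I * lam) * ξ x + u x * η x) x) ∧
      (∀ x, HasDerivAt η (v x * ξ x + I * lam * η x) x) := by
  have hEne : ∀ x, E x ≠ 0 := fun x => by rw [hE]; exact Complex.exp_ne_zero _
  have hc : Continuous fun y => q y * r y := hq.continuous.mul hr.continuous
  -- derivative of the integral
  have hF : ∀ x, HasDerivAt (fun t => ∫ y in Set.Iic t, q y * r y) (q x * r x) x := by
    intro x
    have key : ∀ t : ℝ, (∫ y in Set.Iic t, q y * r y)
        = (∫ y in Set.Iic 0, q y * r y) + ∫ y in (0:ℝ)..t, q y * r y := by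
      intro t
      rw [← intervalIntegral.integral_Iic_sub_Iic hqr.integrableOn hqr.integrableOn]
      ring
    have hI : HasDerivAt (fun t => ∫ y in (0:ℝ)..t, q y * r y) (q x * r x) x :=
      intervalIntegral.integral_hasDerivAt_right (hc.intervalIntegrable 0 x)
        (hc.stronglyMeasurableAtFilter _ _) hc.continuousAt
    have := (hI.const_add (∫ y in Set.Iic 0, q y * r y))
    simpa [← key] using this
  have hEd : ∀ x, HasDerivAt E ((I / 2) * (q x * r x) * E x) x := by
    intro x
    have h1 : HasDerivAt (fun t => (I / 2) * ∫ y in Set.Iic t, q y * r y)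
        ((I / 2) * (q x * r x)) x := (hF x).const_mul _
    have h2 := h1.cexp
    rw [funext hE]
    simpa [mul_comm] using h2
  -- closed forms for ξ and η
  have hGdet : ∀ x, (G x).det = ζ := by
    intro x
    rw [hG, Matrix.det_fin_two_of]
    field_simp [hEne x]
    ring
  have hGinv : ∀ x, (G x)⁻¹ = ζ⁻¹ • !![(E x)⁻¹, 0; -((I / 2) * r x * E x), ζ * E x] := by
    intro x
    rw [Matrix.inv_def, hGdet, hG, Matrix.adjugate_fin_two_of, Ring.inverse_eq_inv']
    norm_num
  have hξ' : ξ = fun x => ζ⁻¹ * ((E x)⁻¹ * α x) := by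
    funext x
    rw [hξ, hGinv]
    simp [Matrix.mulVec, dotProduct, Fin.sum_univ_two]
    ring
  have hη' : η = fun x => ζ⁻¹ * (-((I / 2) * r x * E x) * α x + ζ * E x * β x) := by
    funext x
    rw [hη, hGinv]
    simp [Matrix.mulVec, dotProduct, Fin.sum_univ_two]
    ring
  have hrd : ∀ x, HasDerivAt r (deriv r x) x := fun x =>
    ((hr.differentiable (by simp)) x).hasDerivAt
  constructor
  · intro x
    have hEinv := (hasDerivAt_inv (hEne x)).comp x (hEd x)
    rw [Function.comp_def] at hEinv
    have h1 := (hEinv.mul (hα x)).const_mul ζ⁻¹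
    rw [hξ']
    refine h1.congr_deriv ?_
    simp only [hu, hη', hlam, zpow_neg, zpow_two]
    field_simp [hEne x]
    ring_nf
  · intro x
    have h1 : HasDerivAt (fun t => ζ⁻¹ * (-((I / 2) * r t * E t) * α t + ζ * E t * β t))
        (ζ⁻¹ * (-((I / 2) * deriv r x * E x + (I / 2) * r x * ((I / 2) * (q x * r x) * E x)) * α x
          + -((I / 2) * r x * E x) * (-(I * ζ ^ 2) * α x + ζ * q x * β x)
          + (ζ * ((I / 2) * (q x * r x) * E x) * β x
            + ζ * E x * (ζ * r x * α x + I * ζ ^ 2 * β x)))) x := by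
      have ha : HasDerivAt (fun t => -((I / 2) * r t * E t) * α t)
          (-((I / 2) * deriv r x * E x + (I / 2) * r x * ((I / 2) * (q x * r x) * E x)) * α x
            + -((I / 2) * r x * E x) * (-(I * ζ ^ 2) * α x + ζ * q x * β x)) x := by
        have h2 : HasDerivAt (fun t => (I / 2) * r t * E t)
            ((I / 2) * deriv r x * E x + (I / 2) * r x * ((I / 2) * (q x * r x) * E x)) x :=
          (((hrd x).const_mul (I / 2)).mul (hEd x))
        exact h2.neg.mul (hα x)
      have hb : HasDerivAt (fun t => ζ * E t * β t)
          (ζ * ((I / 2) * (q x * r x) * E x) * β x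
            + ζ * E x * (ζ * r x * α x + I * ζ ^ 2 * β x)) x :=
        ((hEd x).const_mul ζ).mul (hβ x)
      exact (ha.add hb).const_mul _
    rw [hη']
    convert h1 using 1
    simp only [hv, hξ', hlam]
    field_simp [hEne x]
    ring_nf
    simp only [Complex.I_sq]
    ring_nf
end

section
/- The function ψ(x) := (ψ₁(x), ψ₂(x)) with ψ₁(x) = -e^{-iμ/2} E(x)⁻¹ ∫_x^∞ q(y) dy and ψ₂(x) = e^{-iμ/2} E(x) (1 + (i/2) r(x) ∫_x^∞ q(y) dy) satisfies the zero-energy AKNS system ψ₁' = u ψ₂, ψ₂' = v ψ₁, where u = q E⁻², v = (-(i/2) r' + (1/4) q r²) E², E(x) = exp((i/2)∫_{-∞}^x q r), and μ = ∫_{-∞}^∞ q r. -/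
/-!
With `G(x) = ∫_x^∞ q` and `c = e^{-iμ/2}` we have `E' = (i/2) q r E`, `G' = -q`,
`ψ₁ = -c E⁻¹ G` and `ψ₂ = c E (1 + (i/2) r G)`. Both equations follow from the product rule:
in `ψ₁'` the term from `E⁻¹` supplies the `(i/2) r G` part of `ψ₂`, and in `ψ₂'` the terms
`± (i/2) q r` cancel, leaving `c E G ((i/2) r' - (1/4) q r²)`.
-/

open Complex MeasureTheory Set

section IntegralTails

variable {F : Type*} [NormedAddCommGroup F] [NormedSpace ℝ F] [CompleteSpace F] {f : ℝ → F}

theorem hasDerivAt_integral_Iic (hf : Continuous f) (hfi : Integrable f) (x : ℝ) :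
    HasDerivAt (fun t => ∫ y in Iic t, f y) (f x) x := by
  have split (t : ℝ) : ∫ y in Iic t, f y = (∫ y in Iic 0, f y) + ∫ y in (0 : ℝ)..t, f y := by
    rw [← intervalIntegral.integral_Iic_sub_Iic hfi.integrableOn hfi.integrableOn]
    abel
  refine HasDerivAt.congr_of_eventuallyEq ?_ (Filter.Eventually.of_forall split)
  exact (intervalIntegral.integral_hasDerivAt_right hfi.intervalIntegrable
    (hf.stronglyMeasurableAtFilter _ _) hf.continuousAt).const_add _

theorem hasDerivAt_integral_Ioi (hf : Continuous f) (hfi : Integrable f) (x : ℝ) :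
    HasDerivAt (fun t => ∫ y in Ioi t, f y) (-f x) x := by
  have split (t : ℝ) : ∫ y in Ioi t, f y = (∫ y, f y) - ∫ y in Iic t, f y := by
    rw [← intervalIntegral.integral_Iic_add_Ioi hfi.integrableOn hfi.integrableOn]
    abel
  exact ((hasDerivAt_integral_Iic hf hfi x).const_sub _).congr_of_eventuallyEq
    (Filter.Eventually.of_forall split)

end IntegralTails

section ZeroEnergy

variable {E G : ℝ → ℂ} {q : ℂ} {x : ℝ}

theorem hasDerivAt_zeroEnergy_fst (c r : ℂ) (hE : HasDerivAt E (I / 2 * (q * r) * E x) x)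
    (hE₀ : E x ≠ 0) (hG : HasDerivAt G (-q) x) :
    HasDerivAt (fun t => -c * (E t)⁻¹ * G t)
      (q * E x ^ (-2 : ℤ) * (c * E x * (1 + I / 2 * r * G x))) x := by
  refine (((hE.fun_inv hE₀).const_mul (-c)).fun_mul hG).congr_deriv ?_
  rw [zpow_neg, zpow_two]
  field_simp
  ring

theorem hasDerivAt_zeroEnergy_snd (c : ℂ) {R : ℝ → ℂ} {r' : ℂ}
    (hE : HasDerivAt E (I / 2 * (q * R x) * E x) x) (hE₀ : E x ≠ 0) (hG : HasDerivAt G (-q) x)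
    (hR : HasDerivAt R r' x) :
    HasDerivAt (fun t => c * E t * (1 + I / 2 * R t * G t))
      ((-(I / 2) * r' + 1 / 4 * q * R x ^ 2) * E x ^ 2 * (-c * (E x)⁻¹ * G x)) x := by
  refine ((hE.const_mul c).fun_mul
    (((hR.const_mul (I / 2)).fun_mul hG).const_add 1)).congr_deriv ?_
  linear_combination
    (c * G x * E x * (-(I / 2) * r' + 1 / 4 * q * R x ^ 2)) * mul_inv_cancel₀ hE₀ + (c * E x * G x * q * R x ^ 2 / 4) * I_sq

end ZeroEnergy

theorem zero_energy_jost_psi_uv_general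
    (q r : SchwartzMap ℝ ℂ)
    (E : ℝ → ℂ) (hE : ∀ x, E x = Complex.exp ((I / 2) * ∫ y in Set.Iic x, q y * r y))
    (μ : ℂ)
    (u v : ℝ → ℂ)
    (hu : ∀ x, u x = q x * (E x) ^ (-2 : ℤ))
    (hv : ∀ x, v x = (-(I / 2) * deriv r x + (1 / 4) * q x * (r x) ^ 2) * (E x) ^ 2)
    (ψ₁ ψ₂ : ℝ → ℂ)
    (hψ₁ : ∀ x, ψ₁ x = -Complex.exp (-(I * μ) / 2) * (E x)⁻¹ * ∫ y in Set.Ioi x, q y)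
    (hψ₂ : ∀ x, ψ₂ x = Complex.exp (-(I * μ) / 2) * E x *
      (1 + (I / 2) * r x * ∫ y in Set.Ioi x, q y)) :
    (∀ x, HasDerivAt ψ₁ (u x * ψ₂ x) x) ∧ (∀ x, HasDerivAt ψ₂ (v x * ψ₁ x) x) := by
  have hqr : Integrable (fun y => q y * r y) := r.integrable.mul_of_top_right q.memLp_top
  have hE' : ∀ x, HasDerivAt E (I / 2 * (q x * r x) * E x) x := fun x => by
    rw [funext hE, mul_comm]
    exact ((hasDerivAt_integral_Iic (q.continuous.mul r.continuous) hqr x).const_mul _).cexp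
  have hE₀ : ∀ x, E x ≠ 0 := fun x => hE x ▸ exp_ne_zero _
  have hG : ∀ x, HasDerivAt (fun t => ∫ y in Ioi t, q y) (-q x) x :=
    hasDerivAt_integral_Ioi q.continuous q.integrable
  refine ⟨fun x => ?_, fun x => ?_⟩
  · rw [funext hψ₁, hu, hψ₂]
    exact hasDerivAt_zeroEnergy_fst _ _ (hE' x) (hE₀ x) (hG x)
  · rw [funext hψ₂, hv, hψ₁]
    exact hasDerivAt_zeroEnergy_snd _ (hE' x) (hE₀ x) (hG x)
      r.differentiableAt.hasDerivAt

theorem zero_energy_jost_psi_uv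
    (q r : SchwartzMap ℝ ℂ)
    (E : ℝ → ℂ) (hE : ∀ x, E x = Complex.exp ((I / 2) * ∫ y in Set.Iic x, q y * r y))
    (μ : ℂ) (hμ : μ = ∫ y : ℝ, q y * r y)
    (u v : ℝ → ℂ)
    (hu : ∀ x, u x = q x * (E x) ^ (-2 : ℤ))
    (hv : ∀ x, v x = (-(I / 2) * deriv r x + (1 / 4) * q x * (r x) ^ 2) * (E x) ^ 2)
    (ψ₁ ψ₂ : ℝ → ℂ)
    (hψ₁ : ∀ x, ψ₁ x = -Complex.exp (-(I * μ) / 2) * (E x)⁻¹ * ∫ y in Set.Ioi x, q y)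
    (hψ₂ : ∀ x, ψ₂ x = Complex.exp (-(I * μ) / 2) * E x *
      (1 + (I / 2) * r x * ∫ y in Set.Ioi x, q y)) :
    (∀ x, HasDerivAt ψ₁ (u x * ψ₂ x) x) ∧ (∀ x, HasDerivAt ψ₂ (v x * ψ₁ x) x) :=
  zero_energy_jost_psi_uv_general q r E hE μ u v hu hv ψ₁ ψ₂ hψ₁ hψ₂
end

section
/- The function φ(x) := (φ₁(x), φ₂(x)) with φ₁(x) = (i/2) e^{-iμ/2} q(x) E(x)⁻¹ and φ₂(x) = e^{-iμ/2} E(x) satisfies the zero-energy system φ₁' = p φ₂, φ₂' = s φ₁, where p = ((i/2) q' + (1/4) q² r) E⁻² and s = r E². -/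
open Complex MeasureTheory

theorem zero_energy_jost_psi_ps
    (q r : ℝ → ℂ) (hq : ContDiff ℝ (⊤ : ℕ∞) q) (hr : ContDiff ℝ (⊤ : ℕ∞) r)
    (hqr : Integrable (fun y => q y * r y))
    (E : ℝ → ℂ) (hE : ∀ x, E x = Complex.exp ((I / 2) * ∫ y in Set.Iic x, q y * r y))
    (μ : ℂ) (hμ : μ = ∫ y : ℝ, q y * r y)
    (p s : ℝ → ℂ)
    (hp : ∀ x, p x = ((I / 2) * deriv q x + (1 / 4) * (q x) ^ 2 * r x) * (E x) ^ (-2 : ℤ))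
    (hs : ∀ x, s x = r x * (E x) ^ 2)
    (φ₁ φ₂ : ℝ → ℂ)
    (hφ₁ : ∀ x, φ₁ x = (I / 2) * Complex.exp (-(I * μ) / 2) * q x * (E x)⁻¹)
    (hφ₂ : ∀ x, φ₂ x = Complex.exp (-(I * μ) / 2) * E x) :
    (∀ x, HasDerivAt φ₁ (p x * φ₂ x) x) ∧ (∀ x, HasDerivAt φ₂ (s x * φ₁ x) x) := by
  set f : ℝ → ℂ := fun y => q y * r y with hf
  have hfc : Continuous f := (hq.continuous).mul (hr.continuous)
  set F : ℝ → ℂ := fun x => ∫ y in Set.Iic x, f y with hF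
  have hFd : ∀ x, HasDerivAt F (f x) x := by
    intro x
    have h0 : ∀ b, F b = F 0 + ∫ y in (0:ℝ)..b, f y := by
      intro b
      rw [← intervalIntegral.integral_Iic_sub_Iic (hqr.integrableOn) (hqr.integrableOn)]
      ring
    have hD : HasDerivAt (fun b => F 0 + ∫ y in (0:ℝ)..b, f y) (f x) x := by
      have := (intervalIntegral.integral_hasDerivAt_right
        (hfc.intervalIntegrable 0 x)
        (hfc.stronglyMeasurableAtFilter _ _)
        (hfc.continuousAt)).const_add (F 0)
      exact this
    exact hD.congr_of_eventuallyEq (Filter.Eventually.of_forall h0)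
  have hEeq : E = fun x => Complex.exp ((I / 2) * F x) := funext hE
  have hEd : ∀ x, HasDerivAt E ((I / 2) * f x * E x) x := by
    intro x
    rw [hEeq]
    have : HasDerivAt (fun x => (I / 2) * F x) ((I / 2) * f x) x := (hFd x).const_mul _
    simpa [mul_comm, mul_assoc, mul_left_comm] using this.cexp
  have hEne : ∀ x, E x ≠ 0 := fun x => by rw [hE]; exact Complex.exp_ne_zero _
  set c := Complex.exp (-(I * μ) / 2) with hc
  constructor
  · intro x
    have hqd : HasDerivAt q (deriv q x) x :=
      (hq.differentiable (by simp)).differentiableAt.hasDerivAt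
    have hEinv : HasDerivAt (fun x => (E x)⁻¹)
        (-((E x) ^ 2)⁻¹ * ((I / 2) * f x * E x)) x := by
      simpa [Function.comp_def] using (hasDerivAt_inv (hEne x)).comp x (hEd x)
    have h1 : HasDerivAt (fun x => (I / 2) * c * q x * (E x)⁻¹)
        ((I / 2) * c * deriv q x * (E x)⁻¹ +
          (I / 2) * c * q x * (-((E x) ^ 2)⁻¹ * ((I / 2) * f x * E x))) x := by
      exact (hqd.const_mul ((I / 2) * c)).mul hEinv
    have heq : φ₁ = fun x => (I / 2) * c * q x * (E x)⁻¹ := funext hφ₁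
    rw [heq]
    convert h1 using 1
    rw [hp x, hφ₂ x]
    have hz : (E x) ^ (-2 : ℤ) = ((E x) ^ 2)⁻¹ := by
      rw [zpow_neg, zpow_two, sq]
    rw [hz]
    have hIsq : I * I = -1 := Complex.I_mul_I
    field_simp [hf, hEne x]
    ring_nf
    rw [Complex.I_sq]
    ring
  · intro x
    have heq : φ₂ = fun x => c * E x := funext hφ₂
    rw [heq]
    have h1 : HasDerivAt (fun x => c * E x) (c * ((I / 2) * f x * E x)) x :=
      (hEd x).const_mul c
    convert h1 using 1
    rw [hs x, hφ₁ x]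
    have : (E x) ^ 2 * (E x)⁻¹ = E x := by
      field_simp [hEne x]
    field_simp [hf, hEne x]
    ring
end
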